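/- Suppose Assumption 1 holds. Then the operator norm of conv, where both the domain ℝ^{d_in×h_in×w_in} and the codomain ℝ^{d_out×h_out×w_out} carry the ℓ1 norm (sum of absolute values over all entries), equals max_{1≤j≤d_in} max_{𝒜∈𝒮} Σ_{(k,t)∈𝒜} Σ_{i=1}^{d_out} |K(i,j,k,t)|. -/

import Mathlib

/-!
2D multi-channel convolutional layer, 0-based reindexing of the 1-based
description in the paper.  The input is `X : Fin d_in × Fin h_in × Fin w_in → ℝ`
(a 3D tensor), the kernel is `K : Fin d_out → Fin d_in → Fin k1 → Fin k2 → ℝ`,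
strides `s1 s2`, paddings `p1 p2`,
`h_out = (h_in + 2*p1 - k1)/s1 + 1`, `w_out = (w_in + 2*p2 - k2)/s2 + 1`.
-/

noncomputable section

/-- Zero-padded input, accessed with 0-based padded coordinates `a b`
(so `a` ranges over `0, …, h_in + 2*p1 - 1`):
`padX X j a b = X (j, a - p1, b - p2)` when `p1 ≤ a < h_in + p1` and
`p2 ≤ b < w_in + p2`, and `0` otherwise. -/
def padX (d_in h_in w_in p1 p2 : ℕ)
    (X : Fin d_in × Fin h_in × Fin w_in → ℝ) (j : Fin d_in) (a b : ℕ) : ℝ :=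
  if h : p1 ≤ a ∧ a < h_in + p1 ∧ p2 ≤ b ∧ b < w_in + p2 then
    X (j, ⟨a - p1, by omega⟩, ⟨b - p2, by omega⟩)
  else 0

/-- The 2D multi-channel convolution:
`conv(X)(i,r,c) = ∑ j ∑ k ∑ t, K i j k t * X̃(j, r*s1 + k, c*s2 + t)`
(all indices 0-based). -/
def convMap (d_in d_out h_in w_in k1 k2 s1 s2 p1 p2 : ℕ)
    (K : Fin d_out → Fin d_in → Fin k1 → Fin k2 → ℝ)
    (X : Fin d_in × Fin h_in × Fin w_in → ℝ) :
    Fin d_out × Fin ((h_in + 2*p1 - k1)/s1 + 1) × Fin ((w_in + 2*p2 - k2)/s2 + 1) → ℝ :=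
  fun irc => ∑ j : Fin d_in, ∑ k : Fin k1, ∑ t : Fin k2,
    K irc.1 j k t *
      padX d_in h_in w_in p1 p2 X j (irc.2.1.val * s1 + k.val) (irc.2.2.val * s2 + t.val)

lemma padX_add (d_in h_in w_in p1 p2 : ℕ)
    (X Y : Fin d_in × Fin h_in × Fin w_in → ℝ) (j : Fin d_in) (a b : ℕ) :
    padX d_in h_in w_in p1 p2 (X + Y) j a b =
      padX d_in h_in w_in p1 p2 X j a b + padX d_in h_in w_in p1 p2 Y j a b := by
  unfold padX; split <;> simp

lemma padX_smul (d_in h_in w_in p1 p2 : ℕ) (c : ℝ)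
    (X : Fin d_in × Fin h_in × Fin w_in → ℝ) (j : Fin d_in) (a b : ℕ) :
    padX d_in h_in w_in p1 p2 (c • X) j a b = c * padX d_in h_in w_in p1 p2 X j a b := by
  unfold padX; split <;> simp

/-- `conv` as a linear map between the spaces of 3D tensors. -/
def convLinMap (d_in d_out h_in w_in k1 k2 s1 s2 p1 p2 : ℕ)
    (K : Fin d_out → Fin d_in → Fin k1 → Fin k2 → ℝ) :
    ((Fin d_in × Fin h_in × Fin w_in) → ℝ) →ₗ[ℝ]
      ((Fin d_out × Fin ((h_in + 2*p1 - k1)/s1 + 1) × Fin ((w_in + 2*p2 - k2)/s2 + 1)) → ℝ) where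
  toFun := convMap d_in d_out h_in w_in k1 k2 s1 s2 p1 p2 K
  map_add' X Y := by
    funext irc
    simp only [convMap, padX_add, mul_add, Finset.sum_add_distrib, Pi.add_apply]
  map_smul' c X := by
    funext irc
    simp only [convMap, padX_smul, RingHom.id_apply, Pi.smul_apply, smul_eq_mul,
      Finset.mul_sum]
    congr 1; funext j; congr 1; funext k; congr 1; funext t; ring

/-- `conv` as a continuous linear map between the spaces of 3D tensors,
both equipped with the `ℓ1` norm (sum of absolute values of all entries). -/
def convCLM1 (d_in d_out h_in w_in k1 k2 s1 s2 p1 p2 : ℕ)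
    (K : Fin d_out → Fin d_in → Fin k1 → Fin k2 → ℝ) :
    PiLp 1 (fun _ : Fin d_in × Fin h_in × Fin w_in => ℝ) →L[ℝ]
      PiLp 1 (fun _ : Fin d_out × Fin ((h_in + 2*p1 - k1)/s1 + 1) ×
        Fin ((w_in + 2*p2 - k2)/s2 + 1) => ℝ) :=
  LinearMap.toContinuousLinearMap
    (((WithLp.linearEquiv 1 ℝ _).symm.toLinearMap.comp
        (convLinMap d_in d_out h_in w_in k1 k2 s1 s2 p1 p2 K)).comp
      (WithLp.linearEquiv 1 ℝ _).toLinearMap)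

/-- The index set `𝒜_(a,b)` of Lemma 1 (0-based):
`{(c,d) : s1 ∣ c - a, s2 ∣ d - b, 0 ≤ c - a ≤ h_in + 2p1 - k1, 0 ≤ d - b ≤ w_in + 2p2 - k2}`. -/
def AFin (h_in w_in k1 k2 s1 s2 p1 p2 : ℕ) (a : Fin k1) (b : Fin k2) :
    Finset (Fin k1 × Fin k2) :=
  Finset.univ.filter fun cd =>
    a.val ≤ cd.1.val ∧ s1 ∣ (cd.1.val - a.val) ∧ cd.1.val - a.val ≤ h_in + 2*p1 - k1 ∧
    b.val ≤ cd.2.val ∧ s2 ∣ (cd.2.val - b.val) ∧ cd.2.val - b.val ≤ w_in + 2*p2 - k2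

/-- The collection `𝒮 = {𝒜_(a,b) : (a,b) ∈ {1,…,k1} × {1,…,k2}}`. -/
def Ssets (h_in w_in k1 k2 s1 s2 p1 p2 : ℕ) : Finset (Finset (Fin k1 × Fin k2)) :=
  Finset.univ.image fun ab : Fin k1 × Fin k2 => AFin h_in w_in k1 k2 s1 s2 p1 p2 ab.1 ab.2

/-!
The `ℓ¹ → ℓ¹` operator norm of a linear map is the largest `ℓ¹` norm of the image of a unit
vector. The image of the input unit at `(j, a, b)` consists of the entries `K i j k t` over the
taps `(k, t)` with `r * s1 + k = a + p1` and `c * s2 + t = b + p2` for some output position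
`(r, c)`; these taps form a product of two one-dimensional tap sets, each of which lies in a
factor of some `𝒜`. Conversely, Assumption 1 leaves room to shift any `𝒜` onto the tap set of an
input position inside the unpadded image. As all summands are nonnegative, the two maxima agree.
-/

open Finset

theorem PiLp.opNorm_eq_sup'_norm_single {𝕜 ι F : Type*} [NontriviallyNormedField 𝕜]
    [Fintype ι] [DecidableEq ι] [Nonempty ι] [SeminormedAddCommGroup F] [NormedSpace 𝕜 F]
    (T : PiLp 1 (fun _ : ι => 𝕜) →L[𝕜] F) :
    ‖T‖ = univ.sup' univ_nonempty fun i => ‖T (PiLp.single 1 i 1)‖ := by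
  set C := univ.sup' univ_nonempty fun i => ‖T (PiLp.single 1 i 1)‖
  have hT : ∀ i, ‖T (PiLp.single 1 i 1)‖ ≤ C :=
    fun i => le_sup' (fun i => ‖T (PiLp.single 1 i 1)‖) (mem_univ i)
  refine le_antisymm (T.opNorm_le_bound ((norm_nonneg _).trans (hT (Classical.arbitrary ι)))
    fun x => ?_) (sup'_le _ _ fun i _ => ?_)
  · calc ‖T x‖ = ‖∑ i, x i • T (PiLp.single 1 i 1)‖ := by
          conv_lhs => rw [← (PiLp.basisFun 1 𝕜 ι).sum_repr x]
          simp [PiLp.basisFun_apply]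
      _ ≤ ∑ i, ‖x i‖ * C := norm_sum_le_of_le _ fun i _ => by
          rw [norm_smul]; exact mul_le_mul_of_nonneg_left (hT i) (norm_nonneg _)
      _ = C * ‖x‖ := by rw [PiLp.norm_eq_of_L1, ← sum_mul, mul_comm]
  · simpa using T.le_opNorm (PiLp.single 1 i 1)

theorem Finset.abs_sum_ite_eq_sum_ite_abs {ι : Type*} (s : Finset ι) (p : ι → Prop)
    [DecidablePred p] (hp : ∀ x y, p x → p y → x = y) (f : ι → ℝ) :
    |∑ x ∈ s, if p x then f x else 0| = ∑ x ∈ s, if p x then |f x| else 0 := by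
  rw [← sum_filter, ← sum_filter]
  obtain h | ⟨x, hx⟩ := (s.filter p).eq_empty_or_nonempty
  · simp [h]
  · have : s.filter p = {x} :=
      eq_singleton_iff_unique_mem.2
        ⟨hx, fun y hy => hp y x (mem_filter.1 hy).2 (mem_filter.1 hx).2⟩
    simp [this]

def strideSet (k s M : ℕ) (a : Fin k) : Finset (Fin k) :=
  univ.filter fun c => a.val ≤ c.val ∧ s ∣ c.val - a.val ∧ c.val - a.val ≤ M

/-- The kernel offsets `c` that meet the padded position `A`, i.e. `r * s + c = A` for some output
index `r ≤ M / s`. -/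
def tapSet (k s M A : ℕ) : Finset (Fin k) :=
  univ.filter fun c => c.val ≤ A ∧ s ∣ A - c.val ∧ A - c.val ≤ M

theorem sum_ite_mul_add_eq_ite_mem_tapSet {R : Type*} [AddCommMonoid R] {k s : ℕ} (M A : ℕ)
    (hs : 0 < s) (c : Fin k) (x : R) :
    ∑ r : Fin (M / s + 1), (if r * s + c = A then x else 0) =
      if c ∈ tapSet k s M A then x else 0 := by
  by_cases hc : c ∈ tapSet k s M A
  · obtain ⟨hcA, ⟨q, hq⟩, hqM⟩ := by
      simpa only [tapSet, mem_filter, mem_univ, true_and] using hc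
    have hqr : q < M / s + 1 := Nat.lt_succ_of_le ((Nat.le_div_iff_mul_le hs).2 (by lia))
    rw [Fintype.sum_eq_single ⟨q, hqr⟩, if_pos (by simp; lia), if_pos hc]
    intro r hr
    refine if_neg fun h => hr (Fin.ext (Nat.eq_of_mul_eq_mul_left hs ?_))
    rw [Fin.val_mk, ← hq]; lia
  · rw [if_neg hc]
    refine sum_eq_zero fun r _ => if_neg fun h => hc ?_
    have := (Nat.le_div_iff_mul_le hs).1 (Nat.lt_succ_iff.1 r.isLt)
    simp only [tapSet, mem_filter, mem_univ, true_and]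
    exact ⟨h ▸ Nat.le_add_left _ _, ⟨r, by lia⟩, by lia⟩

theorem tapSet_subset_strideSet {k : ℕ} (s M A : ℕ) (hk : 0 < k) :
    ∃ a : Fin k, tapSet k s M A ⊆ strideSet k s M a := by
  obtain h | hne := (tapSet k s M A).eq_empty_or_nonempty
  · exact ⟨⟨0, hk⟩, by simp [h]⟩
  obtain ⟨a, ha, hmin⟩ : ∃ a ∈ tapSet k s M A, ∀ c ∈ tapSet k s M A, a ≤ c :=
    ⟨_, min'_mem _ hne, fun c hc => min'_le _ _ hc⟩
  refine ⟨a, fun c hc => ?_⟩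
  have hac : a.val ≤ c := hmin c hc
  simp only [tapSet, strideSet, mem_filter, mem_univ, true_and] at ha hc ⊢
  refine ⟨hac, ?_, by lia⟩
  rw [show c - a = (A - a) - (A - c) by lia]
  exact Nat.dvd_sub ha.2.1 hc.2.1

theorem strideSet_subset_tapSet {k s : ℕ} (n p m : ℕ) (hs : 0 < s) (hp : p ≤ m * s)
    (hk : k + m * s ≤ n + p) (a : Fin k) :
    ∃ b < n, strideSet k s (n + 2 * p - k) a ⊆ tapSet k s (n + 2 * p - k) (b + p) := by
  set N := min (n + 2 * p - k) (n + p - 1 - a)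
  set D := s * (N / s)
  have hDN : D ≤ N := Nat.mul_div_le N s
  have le_D : ∀ x, s ∣ x → x ≤ N → x ≤ D := by
    rintro _ ⟨q, rfl⟩ hq
    exact Nat.mul_le_mul_left s ((Nat.le_div_iff_mul_le hs).2 (by lia))
  have hpD : p ≤ D := hp.trans (le_D _ (dvd_mul_left s m) (by lia))
  refine ⟨a + D - p, by lia, fun c hc => ?_⟩
  simp only [tapSet, strideSet, mem_filter, mem_univ, true_and] at hc ⊢
  obtain ⟨hac, hdvd, hcM⟩ := hc
  have hcD : c - a ≤ D := le_D _ hdvd (by lia)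
  refine ⟨by lia, ?_, by lia⟩
  rw [show a + D - p + p - c = D - (c - a) by lia]
  exact Nat.dvd_sub (dvd_mul_right s _) hdvd

lemma padX_single (d_in h_in w_in p1 p2 : ℕ) (j j' : Fin d_in) (a : Fin h_in) (b : Fin w_in)
    (u v : ℕ) :
    padX d_in h_in w_in p1 p2 (Pi.single (j, a, b) 1) j' u v =
      if j' = j ∧ u = a + p1 ∧ v = b + p2 then 1 else 0 := by
  unfold padX
  split_ifs <;> simp_all [Pi.single_apply, Prod.ext_iff, Fin.ext_iff]
  omega

lemma convCLM1_single_apply (d_in d_out h_in w_in k1 k2 s1 s2 p1 p2 : ℕ)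
    (K : Fin d_out → Fin d_in → Fin k1 → Fin k2 → ℝ) (j : Fin d_in) (a : Fin h_in)
    (b : Fin w_in)
    (irc : Fin d_out × Fin ((h_in + 2*p1 - k1)/s1 + 1) × Fin ((w_in + 2*p2 - k2)/s2 + 1)) :
    convCLM1 d_in d_out h_in w_in k1 k2 s1 s2 p1 p2 K (PiLp.single 1 (j, a, b) 1) irc =
      ∑ kt : Fin k1 × Fin k2, if irc.2.1 * s1 + kt.1 = a + p1 ∧ irc.2.2 * s2 + kt.2 = b + p2
        then K irc.1 j kt.1 kt.2 else 0 := by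
  change convMap d_in d_out h_in w_in k1 k2 s1 s2 p1 p2 K (Pi.single (j, a, b) 1) irc = _
  simp only [convMap, padX_single, mul_ite, mul_one, mul_zero, Fintype.sum_prod_type]
  rw [Fintype.sum_eq_single j fun j' hj' => by simp [hj']]
  simp

lemma norm_convCLM1_single (d_in d_out h_in w_in k1 k2 s1 s2 p1 p2 : ℕ) (hs1 : 0 < s1)
    (hs2 : 0 < s2) (K : Fin d_out → Fin d_in → Fin k1 → Fin k2 → ℝ) (j : Fin d_in)
    (a : Fin h_in) (b : Fin w_in) :
    ‖convCLM1 d_in d_out h_in w_in k1 k2 s1 s2 p1 p2 K (PiLp.single 1 (j, a, b) 1)‖ =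
      ∑ kt ∈ tapSet k1 s1 (h_in + 2*p1 - k1) (a + p1) ×ˢ
          tapSet k2 s2 (w_in + 2*p2 - k2) (b + p2),
        ∑ i : Fin d_out, |K i j kt.1 kt.2| := by
  have hunique : ∀ (r c : ℕ) (kt kt' : Fin k1 × Fin k2),
      r * s1 + kt.1 = a + p1 ∧ c * s2 + kt.2 = b + p2 →
      r * s1 + kt'.1 = a + p1 ∧ c * s2 + kt'.2 = b + p2 → kt = kt' := by
    intro r c kt kt' h h'
    ext <;> lia
  rw [PiLp.norm_eq_of_L1]
  simp only [Real.norm_eq_abs, convCLM1_single_apply,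
    abs_sum_ite_eq_sum_ite_abs _ _ (hunique _ _)]
  rw [sum_comm]
  simp only [Fintype.sum_prod_type, ite_and, sum_ite_irrel, sum_const_zero,
    sum_ite_mul_add_eq_ite_mem_tapSet _ _ hs1, sum_ite_mul_add_eq_ite_mem_tapSet _ _ hs2]
  simp only [sum_product, ← sum_filter, filter_mem_eq_inter, univ_inter]

lemma AFin_eq_product (h_in w_in k1 k2 s1 s2 p1 p2 : ℕ) (a : Fin k1) (b : Fin k2) :
    AFin h_in w_in k1 k2 s1 s2 p1 p2 a b =
      strideSet k1 s1 (h_in + 2*p1 - k1) a ×ˢ strideSet k2 s2 (w_in + 2*p2 - k2) b := by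
  ext
  simp only [AFin, strideSet, mem_filter, mem_univ, true_and, mem_product]
  tauto

theorem conv_opNorm_l1_general (d_in d_out h_in w_in k1 k2 s1 s2 p1 p2 : ℕ)
    (hdin : 0 < d_in) (hhin : 0 < h_in) (hwin : 0 < w_in)
    (hk1pos : 0 < k1) (hk2pos : 0 < k2) (hs1 : 0 < s1) (hs2 : 0 < s2)
    (K : Fin d_out → Fin d_in → Fin k1 → Fin k2 → ℝ)
    -- Assumption 1
    (c1 c2 : ℕ)
    (hc1 : p1 ≤ c1 * s1) (hc2 : p2 ≤ c2 * s2)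
    (ha1 : k1 + c1 * s1 ≤ h_in + p1) (ha2 : k2 + c2 * s2 ≤ w_in + p2) :
    ‖convCLM1 d_in d_out h_in w_in k1 k2 s1 s2 p1 p2 K‖ =
      Finset.univ.sup' (Finset.univ_nonempty_iff.mpr (Fin.pos_iff_nonempty.mp hdin))
        (fun j : Fin d_in =>
          (Ssets h_in w_in k1 k2 s1 s2 p1 p2).sup'
            ((Finset.univ_nonempty_iff.mpr ⟨(⟨0, hk1pos⟩, ⟨0, hk2pos⟩)⟩).image _)
            (fun A => ∑ kt ∈ A, ∑ i : Fin d_out, |K i j kt.1 kt.2|)) := by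
  have : Nonempty (Fin d_in × Fin h_in × Fin w_in) := ⟨(⟨0, hdin⟩, ⟨0, hhin⟩, ⟨0, hwin⟩)⟩
  have mass_mono : ∀ (j : Fin d_in) {A B : Finset (Fin k1 × Fin k2)}, A ⊆ B →
      ∑ kt ∈ A, ∑ i : Fin d_out, |K i j kt.1 kt.2| ≤
        ∑ kt ∈ B, ∑ i : Fin d_out, |K i j kt.1 kt.2| :=
    fun j _ _ h => sum_le_sum_of_subset_of_nonneg h fun _ _ _ => by positivity
  rw [PiLp.opNorm_eq_sup'_norm_single]
  apply le_antisymm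
  · refine sup'_le _ _ fun ⟨j, a, b⟩ _ => ?_
    obtain ⟨a0, ha⟩ := tapSet_subset_strideSet s1 (h_in + 2*p1 - k1) (a + p1) hk1pos
    obtain ⟨b0, hb⟩ := tapSet_subset_strideSet s2 (w_in + 2*p2 - k2) (b + p2) hk2pos
    rw [norm_convCLM1_single _ _ _ _ _ _ _ _ _ _ hs1 hs2]
    refine le_sup'_of_le _ (mem_univ j) <|
      le_sup'_of_le _ (mem_image_of_mem _ (mem_univ (a0, b0))) ?_
    rw [AFin_eq_product]
    exact mass_mono j (product_subset_product ha hb)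
  · refine sup'_le _ _ fun j _ => sup'_le _ _ fun A hA => ?_
    obtain ⟨⟨a0, b0⟩, -, rfl⟩ := mem_image.1 hA
    obtain ⟨a, ha, ha0⟩ := strideSet_subset_tapSet h_in p1 c1 hs1 hc1 ha1 a0
    obtain ⟨b, hb, hb0⟩ := strideSet_subset_tapSet w_in p2 c2 hs2 hc2 ha2 b0
    refine le_sup'_of_le _ (mem_univ (j, ⟨a, ha⟩, ⟨b, hb⟩)) ?_
    rw [norm_convCLM1_single _ _ _ _ _ _ _ _ _ _ hs1 hs2, AFin_eq_product]
    exact mass_mono j (product_subset_product ha0 hb0)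

/-- Under Assumption 1 the `ℓ1 → ℓ1` operator norm of `conv`
equals `max_j max_{𝒜 ∈ 𝒮} ∑_{(k,t) ∈ 𝒜} ∑_i |K i j k t|`. -/
theorem conv_opNorm_l1 (d_in d_out h_in w_in k1 k2 s1 s2 p1 p2 : ℕ)
    (hdin : 0 < d_in) (hdout : 0 < d_out) (hhin : 0 < h_in) (hwin : 0 < w_in)
    (hk1pos : 0 < k1) (hk2pos : 0 < k2) (hs1 : 0 < s1) (hs2 : 0 < s2)
    (hk1 : k1 ≤ h_in + 2*p1) (hk2 : k2 ≤ w_in + 2*p2)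
    (K : Fin d_out → Fin d_in → Fin k1 → Fin k2 → ℝ)
    -- Assumption 1
    (c1 c2 : ℕ) (hc1pos : 0 < c1) (hc2pos : 0 < c2)
    (hc1 : p1 ≤ c1 * s1) (hc2 : p2 ≤ c2 * s2)
    (hc1min : ∀ m : ℕ, 0 < m → p1 ≤ m * s1 → c1 ≤ m)
    (hc2min : ∀ m : ℕ, 0 < m → p2 ≤ m * s2 → c2 ≤ m)
    (ha1 : k1 + c1 * s1 ≤ h_in + p1) (ha2 : k2 + c2 * s2 ≤ w_in + p2) :
    ‖convCLM1 d_in d_out h_in w_in k1 k2 s1 s2 p1 p2 K‖ =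
      Finset.univ.sup' (Finset.univ_nonempty_iff.mpr (Fin.pos_iff_nonempty.mp hdin))
        (fun j : Fin d_in =>
          (Ssets h_in w_in k1 k2 s1 s2 p1 p2).sup'
            ((Finset.univ_nonempty_iff.mpr ⟨(⟨0, hk1pos⟩, ⟨0, hk2pos⟩)⟩).image _)
            (fun A => ∑ kt ∈ A, ∑ i : Fin d_out, |K i j kt.1 kt.2|)) :=
  conv_opNorm_l1_general d_in d_out h_in w_in k1 k2 s1 s2 p1 p2 hdin hhin hwin hk1pos hk2pos hs1 hs2
    K c1 c2 hc1 hc2 ha1 ha2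

end
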